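/- Multi-measurement DSMUR: Let {M_{a|x}}_{a=1}^d, for x = 1,…,n, be n POVMs on C^D, let c = (c_1,…,c_n) be a probability vector of weights, let ρ be a density matrix, and set p(a|x) = Tr(ρ M_{a|x}). For each k define S'_k = max over families of subsets I_x ⊆ {1,…,d} with Σ_x |I_x| = k of λ₁( Σ_x c_x Σ_{a∈I_x} M_{a|x} ). Then for every k, the sum of the k largest entries of the nd-dimensional concatenated vector ⊕_{x=1}^n c_x p_x (whose entries are c_x · p(a|x)) is at most S'_k. -/

import Mathlib

open scoped BigOperators ComplexOrder

/-- Sum of the `k` largest entries of `x`: the maximum of `∑ i ∈ s, x i`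
over all `k`-element index sets `s`. -/
noncomputable def kMaxSum {ι : Type*} [Fintype ι] (x : ι → ℝ) (k : ℕ) : ℝ :=
  sSup {t : ℝ | ∃ s : Finset ι, s.card = k ∧ t = ∑ i ∈ s, x i}

/-- The largest eigenvalue `λ₁(A)` of a (Hermitian) matrix `A`: the supremum of the real
points of its spectrum. -/
noncomputable def maxEig {D : ℕ} (A : Matrix (Fin D) (Fin D) ℂ) : ℝ :=
  sSup {t : ℝ | (t : ℂ) ∈ spectrum ℂ A}

/-- `S'_k`: the maximum over families of subsets `I_x` with `Σ_x |I_x| = k` of the largest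
eigenvalue of `Σ_x c_x Σ_{a∈I_x} M_{a|x}`. -/
noncomputable def Sval' {D d n : ℕ} (M : Fin n → Fin d → Matrix (Fin D) (Fin D) ℂ)
    (c : Fin n → ℝ) (k : ℕ) : ℝ :=
  sSup {t : ℝ | ∃ I : Fin n → Finset (Fin d), (∑ x, (I x).card) = k ∧
    t = maxEig (∑ x, ((c x : ℝ) : ℂ) • ∑ a ∈ I x, M x a)}

/-!
A `k`-element set `s` of pairs `(x, a)` splits into slices `I x = {a | (x, a) ∈ s}` with
`∑ x, |I x| = k`, and its entries sum to `Re Tr (ρ O)` for `O = ∑ x, c x • ∑ a ∈ I x, M x a`.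
In an eigenbasis of the Hermitian matrix `O`, `Tr (ρ O)` is the average of the eigenvalues of `O`
weighted by the diagonal of `ρ`, which is nonnegative with sum `Tr ρ = 1`; hence it is at most
`λ₁(O) ≤ S'_k`.
-/

namespace Matrix

variable {n 𝕜 : Type*} [Fintype n] [DecidableEq n] [RCLike 𝕜]

lemma IsHermitian.trace_mul_eq_sum_eigenvalues {A : Matrix n n 𝕜} (hA : A.IsHermitian)
    (ρ : Matrix n n 𝕜) :
    (ρ * A).trace = ∑ i, (star (hA.eigenvectorUnitary : Matrix n n 𝕜) * ρ *
      hA.eigenvectorUnitary) i i * hA.eigenvalues i := by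
  conv_lhs => rw [hA.spectral_theorem, Unitary.conjStarAlgAut_apply, ← Matrix.mul_assoc,
    trace_mul_cycle, ← Matrix.mul_assoc]
  simp [trace, mul_diagonal]

lemma IsHermitian.re_trace_mul_le {A ρ : Matrix n n 𝕜} (hA : A.IsHermitian)
    (hρ : ρ.PosSemidef) {m : ℝ} (hm : ∀ i, hA.eigenvalues i ≤ m) :
    RCLike.re (ρ * A).trace ≤ m * RCLike.re ρ.trace := by
  set U : Matrix n n 𝕜 := ↑hA.eigenvectorUnitary
  set σ := star U * ρ * U
  have hσ : σ.PosSemidef := by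
    simpa [σ, star_eq_conjTranspose] using hρ.conjTranspose_mul_mul_same U
  have hσtr : σ.trace = ρ.trace := by
    rw [trace_mul_cycle, Unitary.mul_star_self_of_mem hA.eigenvectorUnitary.2, Matrix.one_mul]
  have hσdiag (i : n) : 0 ≤ RCLike.re (σ i i) := (RCLike.nonneg_iff.mp hσ.diag_nonneg).1
  calc RCLike.re (ρ * A).trace = ∑ i, RCLike.re (σ i i) * hA.eigenvalues i := by
        simp [hA.trace_mul_eq_sum_eigenvalues ρ, σ, U]
    _ ≤ ∑ i, RCLike.re (σ i i) * m := by gcongr with i; exacts [hσdiag i, hm i]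
    _ = m * RCLike.re ρ.trace := by
        rw [← Finset.sum_mul, ← hσtr, trace, map_sum, mul_comm]; rfl

lemma IsHermitian.eigenvalues_le_maxEig {D : ℕ} {A : Matrix (Fin D) (Fin D) ℂ}
    (hA : A.IsHermitian) (i : Fin D) : hA.eigenvalues i ≤ maxEig A := by
  have hspec : {t : ℝ | (t : ℂ) ∈ spectrum ℂ A} = Set.range hA.eigenvalues := by
    ext t
    rw [← hA.spectrum_real_eq_range_eigenvalues]
    exact spectrum.algebraMap_mem_iff ℂ (r := t)
  rw [maxEig, hspec]
  exact le_csSup (Set.finite_range _).bddAbove ⟨i, rfl⟩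

lemma IsHermitian.re_trace_mul_le_maxEig {D : ℕ} {A ρ : Matrix (Fin D) (Fin D) ℂ}
    (hA : A.IsHermitian) (hρ : ρ.PosSemidef) (hρ1 : ρ.trace = 1) :
    (ρ * A).trace.re ≤ maxEig A := by
  simpa [hρ1] using hA.re_trace_mul_le hρ hA.eigenvalues_le_maxEig

end Matrix

lemma Finset.sum_eq_sum_sum_slices {ι κ β : Type*} [Fintype ι] [Fintype κ] [DecidableEq ι]
    [DecidableEq κ] [AddCommMonoid β] (s : Finset (ι × κ)) (f : ι × κ → β) :
    ∑ p ∈ s, f p = ∑ x, ∑ a ∈ {a | (x, a) ∈ s}, f (x, a) :=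
  Finset.sum_finset_product' s Finset.univ _ (by simp) (f := fun x a => f (x, a))

lemma Finset.card_eq_sum_card_slices {ι κ : Type*} [Fintype ι] [Fintype κ] [DecidableEq ι]
    [DecidableEq κ] (s : Finset (ι × κ)) :
    s.card = ∑ x, ({a | (x, a) ∈ s} : Finset κ).card := by
  simp only [Finset.card_eq_sum_ones, Finset.sum_eq_sum_sum_slices s]

lemma kMaxSum_le {ι : Type*} [Fintype ι] {x : ι → ℝ} {k : ℕ} {b : ℝ}
    (hk : k ≤ Fintype.card ι) (h : ∀ s : Finset ι, s.card = k → ∑ i ∈ s, x i ≤ b) :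
    kMaxSum x k ≤ b := by
  obtain ⟨s, -, hs⟩ := Finset.exists_subset_card_eq (s := Finset.univ) (n := k) hk
  refine csSup_le ⟨_, s, hs, rfl⟩ ?_
  rintro t ⟨s, hs, rfl⟩
  exact h s hs

section WeightedSum

variable {m ι κ : Type*} [Fintype ι]
  (M : ι → κ → Matrix m m ℂ) (c : ι → ℝ) (I : ι → Finset κ)

lemma isHermitian_sum_smul_sum (hM : ∀ x a, (M x a).IsHermitian) :
    (∑ x, ((c x : ℝ) : ℂ) • ∑ a ∈ I x, M x a).IsHermitian := by
  simp only [Matrix.isHermitian_iff_isSelfAdjoint] at hM ⊢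
  exact isSelfAdjoint_sum _ fun x _ =>
    .smul (Complex.conj_ofReal _) (isSelfAdjoint_sum _ fun a _ => hM x a)

lemma re_trace_mul_sum_smul_sum [Fintype m] (ρ : Matrix m m ℂ) :
    (ρ * ∑ x, ((c x : ℝ) : ℂ) • ∑ a ∈ I x, M x a).trace.re =
      ∑ x, c x * ∑ a ∈ I x, (ρ * M x a).trace.re := by
  simp [Matrix.trace_sum, Complex.re_sum, Finset.mul_sum]

end WeightedSum

lemma maxEig_le_Sval' {D d n : ℕ} (M : Fin n → Fin d → Matrix (Fin D) (Fin D) ℂ)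
    (c : Fin n → ℝ) (I : Fin n → Finset (Fin d)) :
    maxEig (∑ x, ((c x : ℝ) : ℂ) • ∑ a ∈ I x, M x a) ≤ Sval' M c (∑ x, (I x).card) := by
  refine le_csSup ?_ ⟨I, rfl, rfl⟩
  refine ((Set.finite_range fun J : Fin n → Finset (Fin d) =>
    maxEig (∑ x, ((c x : ℝ) : ℂ) • ∑ a ∈ J x, M x a)).subset ?_).bddAbove
  rintro t ⟨J, -, rfl⟩
  exact ⟨J, rfl⟩

theorem multi_measurement_dsmur_general {D d n : ℕ}
    (M : Fin n → Fin d → Matrix (Fin D) (Fin D) ℂ)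
    (hMpos : ∀ x a, (M x a).PosSemidef)
    (c : Fin n → ℝ)
    (ρ : Matrix (Fin D) (Fin D) ℂ) (hρ : ρ.PosSemidef) (hρ1 : ρ.trace = 1) :
    ∀ k ≤ n * d,
      kMaxSum (fun xa : Fin n × Fin d => c xa.1 * ((ρ * M xa.1 xa.2).trace).re) k
        ≤ Sval' M c k := by
  intro k hk
  refine kMaxSum_le (by simpa using hk) fun s hs => ?_
  set I : Fin n → Finset (Fin d) := fun x => {a | (x, a) ∈ s}
  have hcard : ∑ x, (I x).card = k := by rw [← hs, Finset.card_eq_sum_card_slices]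
  calc ∑ p ∈ s, c p.1 * (ρ * M p.1 p.2).trace.re
      = ∑ x, c x * ∑ a ∈ I x, (ρ * M x a).trace.re := by
        simp only [Finset.sum_eq_sum_sum_slices s, Finset.mul_sum, I]
    _ = (ρ * ∑ x, ((c x : ℝ) : ℂ) • ∑ a ∈ I x, M x a).trace.re :=
        (re_trace_mul_sum_smul_sum M c I ρ).symm
    _ ≤ maxEig (∑ x, ((c x : ℝ) : ℂ) • ∑ a ∈ I x, M x a) :=
        (isHermitian_sum_smul_sum M c I fun x a => (hMpos x a).isHermitian).re_trace_mul_le_maxEig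
          hρ hρ1
    _ ≤ Sval' M c k := hcard ▸ maxEig_le_Sval' M c I

/-- Multi-measurement DSMUR: for every `k`, the sum of the `k` largest entries of the
concatenated vector `⊕_x c_x p_x` (with entries `c_x · p(a|x)`) is at most `S'_k`. -/
theorem multi_measurement_dsmur {D d n : ℕ}
    (M : Fin n → Fin d → Matrix (Fin D) (Fin D) ℂ)
    (hMpos : ∀ x a, (M x a).PosSemidef) (hMsum : ∀ x, ∑ a, M x a = 1)
    (c : Fin n → ℝ) (hc0 : ∀ x, 0 ≤ c x) (hc1 : ∑ x, c x = 1)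
    (ρ : Matrix (Fin D) (Fin D) ℂ) (hρ : ρ.PosSemidef) (hρ1 : ρ.trace = 1) :
    ∀ k ≤ n * d,
      kMaxSum (fun xa : Fin n × Fin d => c xa.1 * ((ρ * M xa.1 xa.2).trace).re) k
        ≤ Sval' M c k :=
  multi_measurement_dsmur_general M hMpos c ρ hρ hρ1
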